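/- Suppose the tensor–vector STP equation A ⋉ X = B has a solution X ∈ C^p, where A ∈ C^{m×n×r} is an F-diagonal tensor all of whose diagonal entries within each frontal slice are equal (each frontal slice is a scalar multiple of the identity). Then each sub-tensor (block) of B is a circulant tensor, i.e., every frontal slice of each block of B is a circulant matrix. -/

import Mathlib

open Matrix

/-- A third-order tensor of size `m × n × r`, given by its `r` frontal slices. -/
abbrev Tensor3 (m n r : ℕ) := Fin r → Matrix (Fin m) (Fin n) ℂ

/-- The t-product of third-order tensors,
`A * B = fold (bcirc A · unfold B)`, expressed slicewise. -/
noncomputable def tProd3 {m n s r : ℕ} (A : Tensor3 m n r) (B : Tensor3 n s r) :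
    Tensor3 m s r :=
  fun k i j => ∑ k' : Fin r, ∑ x : Fin n, A (k - k') i x * B k' x j

/-- The block-circulant matrix of a third-order tensor. -/
noncomputable def bcirc {m n r : ℕ} (A : Tensor3 m n r) :
    Matrix (Fin r × Fin m) (Fin r × Fin n) ℂ :=
  fun p q => A (p.1 - q.1) p.2 q.2

/-- The identity tensor `I_{n×n×r}`: first frontal slice the identity, the rest zero. -/
noncomputable def tId (n r : ℕ) : Tensor3 n n r :=
  fun k => if (k : ℕ) = 0 then (1 : Matrix (Fin n) (Fin n) ℂ) else 0

/-- The Kronecker product of third-order tensors. -/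
noncomputable def tKron {m n r u w v : ℕ} (A : Tensor3 m n r) (B : Tensor3 u w v) :
    Tensor3 (m * u) (n * w) (r * v) :=
  fun k => Matrix.reindex finProdFinEquiv finProdFinEquiv
    (Matrix.kroneckerMap (· * ·) (A (finProdFinEquiv.symm k).1) (B (finProdFinEquiv.symm k).2))

/-- Cast of a tensor along equalities of its dimensions. -/
def castT {r r' m m' n n' : ℕ} (hr : r = r') (hm : m = m') (hn : n = n')
    (A : Tensor3 m n r) : Tensor3 m' n' r' :=
  fun k i j => A (Fin.cast hr.symm k) (Fin.cast hm.symm i) (Fin.cast hn.symm j)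

/-- The semi-tensor product of third-order tensors:
`A ⋉ B = (A ⊗ I_{t/n×t/n×d/r}) * (B ⊗ I_{t/p×t/p×d/s})` with `t = lcm(n,p)`, `d = lcm(r,s)`. -/
noncomputable def tstp {m n r p q s : ℕ} (A : Tensor3 m n r) (B : Tensor3 p q s) :
    Tensor3 (m * (Nat.lcm n p / n)) (q * (Nat.lcm n p / p)) (Nat.lcm r s) :=
  tProd3
    (castT (Nat.mul_div_cancel' (Nat.dvd_lcm_left r s)) rfl
      (Nat.mul_div_cancel' (Nat.dvd_lcm_left n p))
      (tKron A (tId (Nat.lcm n p / n) (Nat.lcm r s / r))))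
    (castT (Nat.mul_div_cancel' (Nat.dvd_lcm_right r s))
      (Nat.mul_div_cancel' (Nat.dvd_lcm_right n p)) rfl
      (tKron B (tId (Nat.lcm n p / p) (Nat.lcm r s / s))))

/-- A vector `X ∈ ℂ^p` viewed as a `p × 1 × 1` tensor. -/
noncomputable def vecT {p : ℕ} (X : Fin p → ℂ) : Tensor3 p 1 1 := fun _ i _ => X i

theorem blk_lt {p w : ℕ} (g : Fin p) (j : Fin w) : g.val * w + j.val < p * w := by
  calc g.val * w + j.val < g.val * w + w := Nat.add_lt_add_left j.isLt _
    _ = (g.val + 1) * w := by ring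
    _ ≤ p * w := Nat.mul_le_mul_right _ g.isLt

/-- A square matrix is circulant if its entries depend only on `(i − j) mod a`. -/
def IsCircMat {a : ℕ} (M : Matrix (Fin a) (Fin a) ℂ) : Prop :=
  ∀ i j i' j' : Fin a, i - j = i' - j' → M i j = M i' j'


private lemma heq_entry {a a' b b' c c' : ℕ} (ha : a = a') (hb : b = b') (hc : c = c')
    {f : Fin a → Matrix (Fin b) (Fin c) ℂ} {g : Fin a' → Matrix (Fin b') (Fin c') ℂ}
    (h : HEq f g) (k : Fin a') (i : Fin b') (j : Fin c') :
    g k i j = f (Fin.cast ha.symm k) (Fin.cast hb.symm i) (Fin.cast hc.symm j) := by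
  subst ha hb hc
  cases h
  rfl

private lemma tstp_entry {n p r : ℕ} (hn : 0 < n) (hp : 0 < p) (hr : 0 < r)
    (A : Tensor3 n n r)
    (hA : ∀ k, ∃ c : ℂ, A k = c • (1 : Matrix (Fin n) (Fin n) ℂ))
    (X : Fin p → ℂ)
    (κ : Fin (Nat.lcm r 1)) :
    ∃ d : ℂ, ∀ (ι : Fin (n * (Nat.lcm n p / n))) (ζ : Fin (1 * (Nat.lcm n p / p))),
      tstp A (vecT X) κ ι ζ =
      d * X ⟨ι.val / (Nat.lcm n p / p), by
        have : ι.val < n * (Nat.lcm n p / n) := ι.isLt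
        have h2 : n * (Nat.lcm n p / n) = Nat.lcm n p := Nat.mul_div_cancel' (Nat.dvd_lcm_left n p)
        have h3 : p * (Nat.lcm n p / p) = Nat.lcm n p := Nat.mul_div_cancel' (Nat.dvd_lcm_right n p)
        have h4 : Nat.lcm n p / p * p = Nat.lcm n p := Nat.div_mul_cancel (Nat.dvd_lcm_right n p)
        exact Nat.div_lt_of_lt_mul (by omega)⟩
        * (if ι.val % (Nat.lcm n p / p) = ζ.val then 1 else 0) := by
  choose c hc using hA
  have hL : 0 < Nat.lcm n p := Nat.pos_of_ne_zero (Nat.lcm_ne_zero hn.ne' hp.ne')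
  have hr1 : Nat.lcm r 1 = r := Nat.lcm_one_right r
  have hv : Nat.lcm r 1 / r = 1 := by rw [hr1]; exact Nat.div_self hr
  have hv' : Nat.lcm r 1 / 1 = Nat.lcm r 1 := Nat.div_one _
  have h2 : n * (Nat.lcm n p / n) = Nat.lcm n p := Nat.mul_div_cancel' (Nat.dvd_lcm_left n p)
  have h3 : p * (Nat.lcm n p / p) = Nat.lcm n p := Nat.mul_div_cancel' (Nat.dvd_lcm_right n p)
  have hw : 0 < Nat.lcm n p / p := Nat.div_pos (Nat.le_of_dvd hL (Nat.dvd_lcm_right n p)) hp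
  unfold tstp tProd3 castT tKron tId vecT
  simp only [Matrix.reindex_apply, Matrix.submatrix_apply, Matrix.kroneckerMap_apply,
    finProdFinEquiv_symm_apply]
  refine ⟨c ⟨κ.val / (Nat.lcm r 1 / r), by have := κ.isLt; rw [hv]; omega⟩, fun ι ζ => ?_⟩
  rw [Fintype.sum_eq_single (⟨0, by omega⟩ : Fin (Nat.lcm r 1)) ?side]
  case side =>
    intro b hb
    have hb0 : b.val ≠ 0 := fun h => hb (Fin.ext h)
    have hblt := b.isLt
    rw [Finset.sum_eq_zero]
    intro x _
    have hcond : ¬ (((Fin.cast (Nat.mul_div_cancel' (Nat.dvd_lcm_right r 1)).symm b).modNat : Fin _) : ℕ) = 0 := by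
      simp only [Fin.coe_modNat, Fin.coe_cast, hv']
      rw [Nat.mod_eq_of_lt hblt]
      exact hb0
    rw [if_neg hcond]
    simp [Matrix.kroneckerMap, Matrix.of_apply]
  · -- main term
    rw [Finset.sum_eq_single (⟨ι.val, by omega⟩ : Fin (Nat.lcm n p)) ?other ?mem]
    case other =>
      intro x _ hx
      have hx' : x.val ≠ ι.val := fun h => hx (Fin.ext h)
      have e1 := Nat.div_add_mod ι.val (Nat.lcm n p / n)
      have e2 := Nat.div_add_mod x.val (Nat.lcm n p / n)
      by_cases hdiv : (ι.val : ℕ) / (Nat.lcm n p / n) = x.val / (Nat.lcm n p / n)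
      · -- divs equal, mods differ: identity (second) factor is zero
        have hmod : ι.val % (Nat.lcm n p / n) ≠ x.val % (Nat.lcm n p / n) := by
          intro h
          refine hx' (Eq.symm ?_)
          rw [← e1, ← e2, hdiv, h]
        simp only [hc, Matrix.smul_apply, smul_eq_mul, Matrix.one_apply, Matrix.zero_apply,
          ite_apply, Fin.ext_iff, Fin.coe_divNat, Fin.coe_modNat, Fin.coe_cast, Fin.sub_def]
        simp [Matrix.one_apply, Fin.ext_iff, Fin.coe_divNat, Fin.coe_modNat, Fin.coe_cast,
          Nat.div_self hr, hdiv, hmod, ite_apply, Nat.mod_one]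
      · -- divs differ: A factor is zero
        simp only [hc, Matrix.smul_apply, smul_eq_mul, Matrix.one_apply, Matrix.zero_apply,
          ite_apply, Fin.ext_iff, Fin.coe_divNat, Fin.coe_modNat, Fin.coe_cast, Fin.sub_def]
        simp [Matrix.one_apply, Fin.ext_iff, Fin.coe_divNat, Fin.coe_modNat, Fin.coe_cast, hdiv,
          ite_apply, Nat.mod_one]
    case mem => intro h; exact absurd (Finset.mem_univ _) h
    have hκ := κ.isLt
    have hζ := ζ.isLt
    simp only [hc, Matrix.smul_apply, smul_eq_mul, Matrix.one_apply, Matrix.zero_apply,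
      ite_apply, Fin.ext_iff, Fin.coe_divNat, Fin.coe_modNat, Fin.coe_cast, Fin.sub_def,
      Nat.sub_zero, Nat.add_mod_left, Nat.mod_eq_of_lt hκ, hv, hv', Nat.mod_one, Nat.div_one,
      Nat.zero_mod]
    have hζw : ζ.val % (Nat.lcm n p / p) = ζ.val := Nat.mod_eq_of_lt (by omega)
    simp [Matrix.one_apply, Fin.ext_iff, Fin.coe_divNat, Fin.coe_modNat, Fin.coe_cast,
      hv, hζw, Nat.div_self hr, Nat.mod_eq_of_lt hκ, Matrix.kroneckerMap, Matrix.of_apply]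
    refine if_congr Iff.rfl ?_ rfl
    congr 2
    apply Fin.ext
    simp [Fin.coe_divNat, Fin.coe_cast, Nat.div_self hr, Nat.div_one]

/-- If `A : n×n×r` is an F-diagonal tensor whose frontal slices are scalar
multiples of the identity, and the STP equation `A ⋉ X = B` has a solution
`X ∈ ℂ^p`, then every block of `B` is a circulant tensor: each frontal slice
of each `(lcm(n,p)/p) × (lcm(n,p)/p)` block of `B` is a circulant matrix. -/
theorem stmt17 {n p r : ℕ} (hn : 0 < n) (hp : 0 < p) (hr : 0 < r)
    (A : Tensor3 n n r)
    (hA : ∀ k, ∃ c : ℂ, A k = c • (1 : Matrix (Fin n) (Fin n) ℂ))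
    (X : Fin p → ℂ)
    (B : Fin r → Matrix (Fin (Nat.lcm n p)) (Fin (Nat.lcm n p / p)) ℂ)
    (hB : HEq (tstp A (vecT X)) B) :
    ∀ (g : Fin p) (k : Fin r),
      IsCircMat (fun t j : Fin (Nat.lcm n p / p) =>
        B k ⟨g.val * (Nat.lcm n p / p) + t.val, by
          have h1 : g.val * (Nat.lcm n p / p) + t.val
              < p * (Nat.lcm n p / p) := blk_lt g t
          have h2 : p * (Nat.lcm n p / p) = Nat.lcm n p :=
            Nat.mul_div_cancel' (Nat.dvd_lcm_right n p)
          omega⟩ j) := by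
  intro g k
  intro t j t' j' hsub
  have hL : 0 < Nat.lcm n p := Nat.pos_of_ne_zero (Nat.lcm_ne_zero hn.ne' hp.ne')
  have hw : 0 < Nat.lcm n p / p := Nat.div_pos (Nat.le_of_dvd hL (Nat.dvd_lcm_right n p)) hp
  have h1 : Nat.lcm r 1 = r := Nat.lcm_one_right r
  have h2 : n * (Nat.lcm n p / n) = Nat.lcm n p := Nat.mul_div_cancel' (Nat.dvd_lcm_left n p)
  have h3 : (1 : ℕ) * (Nat.lcm n p / p) = Nat.lcm n p / p := one_mul _
  have hBe := heq_entry h1 h2 h3 hB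
  obtain ⟨d, hd⟩ := tstp_entry hn hp hr A hA X (Fin.cast h1.symm k)
  simp only [hBe, hd]
  have hdiv1 : ∀ s : Fin (Nat.lcm n p / p),
      (g.val * (Nat.lcm n p / p) + s.val) / (Nat.lcm n p / p) = g.val := by
    intro s
    rw [mul_comm, Nat.mul_add_div hw, Nat.div_eq_of_lt s.isLt, Nat.add_zero]
  have hmod1 : ∀ s : Fin (Nat.lcm n p / p),
      (g.val * (Nat.lcm n p / p) + s.val) % (Nat.lcm n p / p) = s.val := by
    intro s
    rw [mul_comm, Nat.mul_add_mod, Nat.mod_eq_of_lt s.isLt]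
  haveI : NeZero (Nat.lcm n p / p) := ⟨hw.ne'⟩
  have hiff : t = j ↔ t' = j' := by
    rw [← sub_eq_zero (a := t), hsub, sub_eq_zero]
  have hiffv : t.val = j.val ↔ t'.val = j'.val := by
    simpa [Fin.ext_iff] using hiff
  simp only [Fin.coe_cast, hdiv1, hmod1]
  by_cases hcase : t.val = j.val
  · rw [if_pos hcase, if_pos (hiffv.mp hcase)]
  · rw [if_neg hcase, if_neg (fun h => hcase (hiffv.mpr h))]
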